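/- arXiv:2009.02414 — 3 statements merged into one kernel-verified Lean document; each statement's English description precedes it below -/
import Mathlib

section
/- For θ, θ' in Δ^{n+1,u} with θ'_{n+1} < u, we have θ ≤_hr θ' (in Δ^{n+1,u}) if and only if θ'_1 ≤ θ_1 and (θ_2/v, …, θ_{n+1}/v) ≤_hr (θ'_2, …, θ'_{n+1}) in Δ^{n,u-θ'_1}, where v = (Σ_{k=2}^{n+1} θ_k)/(u - θ'_1). -/
/-- The hazard rate order on nonnegative vectors summing to `u`. -/
def hrLE {m : ℕ} (θ θ' : Fin m → ℝ) : Prop :=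
  ∀ i j : Fin m, i ≤ j →
    (∑ k ∈ Finset.Ici j, θ k) * (∑ k ∈ Finset.Ici i, θ' k) ≤
    (∑ k ∈ Finset.Ici i, θ k) * (∑ k ∈ Finset.Ici j, θ' k)

/-!
Write `T_j = ∑_{k ≥ j} θ_k` and `T'_j` likewise. As both totals equal `u > 0`, the hazard rate
inequalities with `i = 1` say `T_j ≤ T'_j` for all `j`, and those with `i, j ≥ 2` are exactly the
hazard rate order of the tails `(θ_2, …)` and `(θ'_2, …)`. Given the latter, the former collapse to
`T_2 ≤ T'_2`, i.e. `θ'_1 ≤ θ_1`, because `T_j T'_2 ≤ T_2 T'_j ≤ T'_2 T'_j`. Rescaling the first vector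
by a positive constant does not change the hazard rate order; when a tail total vanishes the scale
factor is `0` (as `x / 0 = 0`) and both sides are decided directly.
-/

open Finset

section

variable {n : ℕ}

theorem Fin.sum_Ici_zero {M : Type*} [AddCommMonoid M] (f : Fin (n + 1) → M) :
    ∑ k ∈ Ici 0, f k = ∑ k, f k := by
  rw [← bot_eq_zero, Ici_bot]

theorem hrLE_zero_left (θ' : Fin n → ℝ) : hrLE 0 θ' := by
  intro i j _
  simp

theorem hrLE_div_const_iff {θ θ' : Fin n → ℝ} {c : ℝ} (hc : 0 < c) :
    hrLE (fun i => θ i / c) θ' ↔ hrLE θ θ' := by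
  refine forall₃_congr fun i j _ => ?_
  simp only [← sum_div, div_mul_eq_mul_div]
  exact div_le_div_iff_of_pos_right hc

theorem sum_le_sum_of_forall_sum_Ici_le {t t' : Fin n → ℝ}
    (h : ∀ j, ∑ k ∈ Ici j, t k ≤ ∑ k ∈ Ici j, t' k) : ∑ k, t k ≤ ∑ k, t' k := by
  cases n with
  | zero => simp
  | succ n => simpa only [Fin.sum_Ici_zero] using h 0

theorem hrLE.sum_Ici_le {t t' : Fin n → ℝ} (h : hrLE t t') (ht' : ∀ i, 0 ≤ t' i)
    (hpos : 0 < ∑ k, t' k) (hle : ∑ k, t k ≤ ∑ k, t' k) (j : Fin n) :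
    ∑ k ∈ Ici j, t k ≤ ∑ k ∈ Ici j, t' k := by
  cases n with
  | zero => exact j.elim0
  | succ n =>
    have hrow := h 0 j (Fin.zero_le j)
    rw [Fin.sum_Ici_zero, Fin.sum_Ici_zero] at hrow
    have ht'j : 0 ≤ ∑ k ∈ Ici j, t' k := sum_nonneg fun k _ => ht' k
    refine le_of_mul_le_mul_right ?_ hpos
    calc (∑ k ∈ Ici j, t k) * ∑ k, t' k ≤ (∑ k, t k) * ∑ k ∈ Ici j, t' k := hrow
      _ ≤ (∑ k ∈ Ici j, t' k) * ∑ k, t' k := by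
        rw [mul_comm]; exact mul_le_mul_of_nonneg_left hle ht'j

theorem hrLE_iff_row_zero_and_hrLE_tail (θ θ' : Fin (n + 1) → ℝ) :
    hrLE θ θ' ↔
      (∀ j : Fin n, (∑ k ∈ Ici j, θ k.succ) * ∑ k, θ' k ≤ (∑ k, θ k) * ∑ k ∈ Ici j, θ' k.succ) ∧
        hrLE (fun i => θ i.succ) (fun i => θ' i.succ) := by
  simp only [hrLE, ← Fin.sum_Ici_succ, ← Fin.sum_Ici_zero]
  constructor
  · intro h
    exact ⟨fun j => h 0 j.succ (Fin.zero_le _),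
      fun i j hij => h i.succ j.succ (Fin.succ_le_succ_iff.mpr hij)⟩
  · rintro ⟨hrow, htail⟩ i j hij
    cases i using Fin.cases with
    | zero =>
      cases j using Fin.cases with
      | zero => exact le_rfl
      | succ j => exact hrow j
    | succ i =>
      cases j using Fin.cases with
      | zero => exact absurd hij (by simp)
      | succ j => exact htail i j (Fin.succ_le_succ_iff.mp hij)

theorem forall_sum_Ici_le_and_hrLE_iff {t t' : Fin n → ℝ} (ht : ∀ i, 0 ≤ t i)
    (ht' : ∀ i, 0 ≤ t' i) :
    ((∀ j, ∑ k ∈ Ici j, t k ≤ ∑ k ∈ Ici j, t' k) ∧ hrLE t t') ↔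
      ∑ k, t k ≤ ∑ k, t' k ∧ hrLE (fun i => t i / ((∑ k, t k) / ∑ k, t' k)) t' := by
  have hB : 0 ≤ ∑ k, t' k := sum_nonneg fun k _ => ht' k
  rcases (sum_nonneg fun k _ => ht k : 0 ≤ ∑ k, t k).eq_or_lt with hA | hA
  · obtain rfl : t = 0 :=
      funext fun k => (sum_eq_zero_iff_of_nonneg fun k _ => ht k).mp hA.symm k (mem_univ k)
    simp only [Pi.zero_apply, sum_const_zero, zero_div, div_zero]
    exact iff_of_true ⟨fun j => sum_nonneg fun k _ => ht' k, hrLE_zero_left t'⟩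
      ⟨hB, hrLE_zero_left t'⟩
  rcases hB.eq_or_lt with hB | hB
  · have hnot : ¬ ∑ k, t k ≤ ∑ k, t' k := by rw [← hB]; exact not_le.mpr hA
    exact iff_of_false (fun h => hnot (sum_le_sum_of_forall_sum_Ici_le h.1)) (fun h => hnot h.1)
  rw [hrLE_div_const_iff (div_pos hA hB)]
  exact ⟨fun h => ⟨sum_le_sum_of_forall_sum_Ici_le h.1, h.2⟩,
    fun h => ⟨h.2.sum_Ici_le ht' hB h.1, h.2⟩⟩

end

theorem hr_dimension_reduction_general (n : ℕ) (u : ℝ) (hu : 0 < u)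
    (θ θ' : Fin (n + 1) → ℝ)
    (hθ : (∀ i, 0 ≤ θ i) ∧ ∑ i, θ i = u)
    (hθ' : (∀ i, 0 ≤ θ' i) ∧ ∑ i, θ' i = u) :
    hrLE θ θ' ↔
      θ' 0 ≤ θ 0 ∧
        hrLE (fun i : Fin n => θ i.succ / ((∑ k : Fin n, θ k.succ) / (u - θ' 0)))
             (fun i : Fin n => θ' i.succ) := by
  obtain ⟨hθ, hθsum⟩ := hθ
  obtain ⟨hθ', hθ'sum⟩ := hθ'
  have htail : ∑ k : Fin n, θ k.succ = u - θ 0 := by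
    rw [← hθsum, Fin.sum_univ_succ]; ring
  have htail' : ∑ k : Fin n, θ' k.succ = u - θ' 0 := by
    rw [← hθ'sum, Fin.sum_univ_succ]; ring
  have hhead : θ' 0 ≤ θ 0 ↔ ∑ k : Fin n, θ k.succ ≤ ∑ k : Fin n, θ' k.succ := by
    rw [htail, htail', sub_le_sub_iff_left]
  rw [hrLE_iff_row_zero_and_hrLE_tail, hθsum, hθ'sum, hhead, ← htail',
    ← forall_sum_Ici_le_and_hrLE_iff (fun i => hθ i.succ) (fun i => hθ' i.succ)]
  simp_rw [mul_comm _ u, mul_le_mul_iff_right₀ hu]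

/-- Dimension reduction for the hazard rate order: given the first coordinate,
the order can be verified in one dimension less. -/
theorem hr_dimension_reduction (n : ℕ) (hn : 1 ≤ n) (u : ℝ) (hu : 0 < u)
    (θ θ' : Fin (n + 1) → ℝ)
    (hθ : (∀ i, 0 ≤ θ i) ∧ ∑ i, θ i = u)
    (hθ' : (∀ i, 0 ≤ θ' i) ∧ ∑ i, θ' i = u)
    (hlast : θ' (Fin.last n) < u) :
    hrLE θ θ' ↔
      θ' 0 ≤ θ 0 ∧
        hrLE (fun i : Fin n => θ i.succ / ((∑ k : Fin n, θ k.succ) / (u - θ' 0)))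
             (fun i : Fin n => θ' i.succ) :=
  hr_dimension_reduction_general n u hu θ θ' hθ hθ'
end

section
/- For n ≥ 1 and u > 0: ∫_0^u ∫_0^{u−θ_1} ⋯ ∫_0^{u−Σ_{i=1}^{n−1}θ_i} ∏_{i=1}^n θ_i/(Σ_{j=i}^n θ_j) dθ_n ⋯ dθ_1 = u^n/(n!)^2. -/
/-!
For `x` with positive coordinates, `∏ᵢ x_{σ i} / (x_{σ i} + ⋯ + x_{σ (n-1)})` is the probability
that sampling without replacement with weights `x` draws the indices in the order `σ`, so these
products sum to `1` over all permutations `σ`. The solid simplex is invariant under permutations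
of the coordinates, so all `n!` permuted integrals equal the original one, and their sum is the
integral of `1`, i.e. the volume `u ^ n / n!` of the simplex.
-/

open MeasureTheory Finset

section TailRatio

variable {K : Type*} [Field K]

def tailRatioProd {n : ℕ} (θ : Fin n → K) : K :=
  ∏ i, θ i / ∑ j ∈ Ici i, θ j

theorem tailRatioProd_succ {n : ℕ} (θ : Fin (n + 1) → K) :
    tailRatioProd θ = θ 0 / (∑ j, θ j) * tailRatioProd (Fin.tail θ) := by
  simp only [tailRatioProd, Fin.prod_univ_succ, ← Fin.map_succEmb_Ici, sum_map]
  rw [← bot_eq_zero, Ici_bot]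
  rfl

variable [LinearOrder K] [IsStrictOrderedRing K]

/-- The first draw is `p` with probability `x p / ∑ x`; the remaining draws are a draw from the
other weights, which `Equiv.Perm.decomposeFin` lists as `x ∘ swap 0 p ∘ Fin.succ`. -/
theorem sum_perm_tailRatioProd_comp {n : ℕ} (x : Fin n → K) (hx : ∀ i, 0 < x i) :
    ∑ σ : Equiv.Perm (Fin n), tailRatioProd (x ∘ σ) = 1 := by
  induction n with
  | zero => simp [tailRatioProd]
  | succ n ih =>
    have hsum : ∑ j, x j ≠ 0 := (sum_pos (fun j _ => hx j) univ_nonempty).ne'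
    rw [← Equiv.Perm.decomposeFin.symm.sum_comp, Fintype.sum_prod_type]
    calc ∑ p, ∑ e : Equiv.Perm (Fin n), tailRatioProd (x ∘ Equiv.Perm.decomposeFin.symm (p, e))
        = ∑ p, (x p / ∑ j, x j) * 1 := by
          refine sum_congr rfl fun p _ => ?_
          rw [← ih (x ∘ Equiv.swap 0 p ∘ Fin.succ) fun _ => hx _, mul_sum]
          refine sum_congr rfl fun e _ => ?_
          rw [tailRatioProd_succ, Function.comp_apply, Equiv.Perm.decomposeFin_symm_apply_zero]
          congr 2
          · exact Equiv.sum_comp _ x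
          · ext i
            simp [Fin.tail, Equiv.Perm.decomposeFin_symm_apply_succ]
      _ = 1 := by simp only [mul_one, ← sum_div, div_self hsum]

theorem tailRatioProd_nonneg {n : ℕ} {θ : Fin n → K} (hθ : ∀ i, 0 ≤ θ i) :
    0 ≤ tailRatioProd θ :=
  prod_nonneg fun i _ => div_nonneg (hθ i) (sum_nonneg fun j _ => hθ j)

theorem tailRatioProd_le_one {n : ℕ} {θ : Fin n → K} (hθ : ∀ i, 0 ≤ θ i) :
    tailRatioProd θ ≤ 1 :=
  prod_le_one (fun i _ => div_nonneg (hθ i) (sum_nonneg fun j _ => hθ j)) fun _ _ =>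
    div_le_one_of_le₀ (single_le_sum (fun j _ => hθ j) (mem_Ici.mpr le_rfl))
      (sum_nonneg fun j _ => hθ j)

end TailRatio

def solidSimplex (ι : Type*) [Fintype ι] (u : ℝ) : Set (ι → ℝ) :=
  {θ | (∀ i, 0 ≤ θ i) ∧ ∑ i, θ i ≤ u}

section SolidSimplex

variable {ι : Type*} [Fintype ι]

theorem isClosed_solidSimplex (u : ℝ) : IsClosed (solidSimplex ι u) := by
  simp only [solidSimplex, Set.ofPred_and, Set.ofPred_forall]
  exact (isClosed_iInter fun i => isClosed_le continuous_const (continuous_apply i)).inter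
    (isClosed_le (by fun_prop) continuous_const)

theorem solidSimplex_subset_Icc (u : ℝ) : solidSimplex ι u ⊆ Set.Icc 0 (fun _ => u) :=
  fun _ ⟨hθ, hsum⟩ => ⟨hθ, fun i => (single_le_sum (fun j _ => hθ j) (mem_univ i)).trans hsum⟩

theorem isCompact_solidSimplex (u : ℝ) : IsCompact (solidSimplex ι u) :=
  isCompact_Icc.of_isClosed_subset (isClosed_solidSimplex u) (solidSimplex_subset_Icc u)

theorem nonneg_of_mem_solidSimplex {u : ℝ} {θ : ι → ℝ} (hθ : θ ∈ solidSimplex ι u) : 0 ≤ u :=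
  (sum_nonneg fun i _ => hθ.1 i).trans hθ.2

theorem comp_perm_mem_solidSimplex_iff (σ : Equiv.Perm ι) {u : ℝ} {θ : ι → ℝ} :
    θ ∘ σ ∈ solidSimplex ι u ↔ θ ∈ solidSimplex ι u := by
  simp only [solidSimplex, Set.mem_ofPred_eq, Function.comp_apply, Equiv.sum_comp σ θ]
  exact and_congr_left' (σ.forall_congr_right (q := fun i => 0 ≤ θ i))

theorem setIntegral_solidSimplex_comp_perm {E : Type*} [NormedAddCommGroup E] [NormedSpace ℝ E]
    (f : (ι → ℝ) → E) (σ : Equiv.Perm ι) (u : ℝ) :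
    ∫ θ in solidSimplex ι u, f (θ ∘ σ) = ∫ θ in solidSimplex ι u, f θ := by
  set T := MeasurableEquiv.arrowCongr' σ.symm (MeasurableEquiv.refl ℝ)
  have hT : ∀ θ, T θ = θ ∘ σ := fun θ => rfl
  have hpre : T ⁻¹' solidSimplex ι u = solidSimplex ι u := by
    ext θ
    rw [Set.mem_preimage, hT, comp_perm_mem_solidSimplex_iff]
  have := (volume_preserving_arrowCongr' σ.symm (MeasurableEquiv.refl ℝ)
    (MeasurePreserving.id volume)).setIntegral_preimage_emb T.measurableEmbedding f
    (solidSimplex ι u)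
  rwa [hpre] at this

end SolidSimplex

theorem cons_mem_solidSimplex_iff {n : ℕ} {u t : ℝ} {y : Fin n → ℝ} :
    Fin.cons t y ∈ solidSimplex (Fin (n + 1)) u ↔ 0 ≤ t ∧ y ∈ solidSimplex (Fin n) (u - t) := by
  simp only [solidSimplex, Set.mem_ofPred_eq, Fin.forall_fin_succ, Fin.cons_zero, Fin.cons_succ,
    Fin.sum_univ_succ, and_assoc, le_sub_iff_add_le']

theorem integral_sub_pow_div_factorial (n : ℕ) (u : ℝ) :
    ∫ t in (0 : ℝ)..u, (u - t) ^ n / n.factorial = u ^ (n + 1) / (n + 1).factorial := by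
  rw [intervalIntegral.integral_div, intervalIntegral.integral_comp_sub_left fun t => t ^ n,
    sub_self, sub_zero, integral_pow, zero_pow n.succ_ne_zero, sub_zero, Nat.factorial_succ,
    Nat.cast_mul, div_div]
  push_cast
  rfl

theorem volume_solidSimplex_succ (n : ℕ) (u : ℝ) :
    volume (solidSimplex (Fin (n + 1)) u) =
      ∫⁻ t in Set.Icc 0 u, volume (solidSimplex (Fin n) (u - t)) := by
  let e := MeasurableEquiv.piFinSuccAbove (fun _ : Fin (n + 1) => ℝ) 0
  have hslice : ∀ t, volume (Prod.mk t ⁻¹' (e.symm ⁻¹' solidSimplex (Fin (n + 1)) u)) =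
      (Set.Icc 0 u).indicator (fun t => volume (solidSimplex (Fin n) (u - t))) t := by
    intro t
    have hmem : ∀ y, y ∈ Prod.mk t ⁻¹' (e.symm ⁻¹' solidSimplex (Fin (n + 1)) u) ↔
        0 ≤ t ∧ y ∈ solidSimplex (Fin n) (u - t) := fun y => by
      simp only [Set.mem_preimage, e, MeasurableEquiv.piFinSuccAbove_symm_apply,
        Fin.insertNthEquiv_zero]
      exact cons_mem_solidSimplex_iff
    by_cases ht : t ∈ Set.Icc 0 u
    · rw [Set.indicator_of_mem ht]
      congr 1 with y
      simp only [hmem, ht.1, true_and]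
    · rw [Set.indicator_of_notMem ht, measure_eq_zero_iff_ae_notMem]
      refine ae_of_all _ fun y hy => ht ?_
      obtain ⟨h0, hy⟩ := (hmem y).1 hy
      exact ⟨h0, sub_nonneg.1 (nonneg_of_mem_solidSimplex hy)⟩
  have he := (volume_preserving_piFinSuccAbove (fun _ : Fin (n + 1) => ℝ) 0).symm
  rw [← he.measure_preimage_equiv, Measure.volume_eq_prod, Measure.prod_apply
      (e.symm.measurable (isClosed_solidSimplex u).measurableSet)]
  simp only [hslice, lintegral_indicator measurableSet_Icc]

theorem volume_solidSimplex (n : ℕ) {u : ℝ} (hu : 0 ≤ u) :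
    volume (solidSimplex (Fin n) u) = ENNReal.ofReal (u ^ n / n.factorial) := by
  induction n generalizing u with
  | zero =>
    have : solidSimplex (Fin 0) u = Set.univ := by ext θ; simp [solidSimplex, hu]
    simp [this, volume_pi]
  | succ n ih =>
    have hint : IntegrableOn (fun t : ℝ => (u - t) ^ n / n.factorial) (Set.Icc 0 u) :=
      (by fun_prop : Continuous fun t : ℝ => (u - t) ^ n / n.factorial).integrableOn_Icc
    have hnonneg : ∀ᵐ t ∂volume.restrict (Set.Icc 0 u), 0 ≤ (u - t) ^ n / n.factorial :=
      (ae_restrict_mem measurableSet_Icc).mono fun t ht => by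
        have := sub_nonneg.2 ht.2
        positivity
    rw [volume_solidSimplex_succ, setLIntegral_congr_fun measurableSet_Icc
        fun t ht => ih (sub_nonneg.2 ht.2),
      ← ofReal_integral_eq_lintegral_ofReal hint hnonneg, integral_Icc_eq_integral_Ioc,
      ← intervalIntegral.integral_of_le hu, integral_sub_pow_div_factorial]

theorem integrableOn_tailRatioProd_comp {n : ℕ} (σ : Equiv.Perm (Fin n)) (u : ℝ) :
    IntegrableOn (fun θ => tailRatioProd (θ ∘ σ)) (solidSimplex (Fin n) u) := by
  have hmeas : Measurable fun θ : Fin n → ℝ => tailRatioProd (θ ∘ σ) := by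
    unfold tailRatioProd
    fun_prop
  refine Measure.integrableOn_of_bounded (M := 1) (isCompact_solidSimplex u).measure_lt_top.ne
    hmeas.aestronglyMeasurable ?_
  filter_upwards [ae_restrict_mem (isClosed_solidSimplex u).measurableSet] with θ hθ
  have hθσ : ∀ i, 0 ≤ (θ ∘ σ) i := fun i => hθ.1 (σ i)
  rw [Real.norm_of_nonneg (tailRatioProd_nonneg hθσ)]
  exact tailRatioProd_le_one hθσ

theorem sum_perm_setIntegral_tailRatioProd_comp (n : ℕ) {u : ℝ} (hu : 0 ≤ u) :
    ∑ σ : Equiv.Perm (Fin n), ∫ θ in solidSimplex (Fin n) u, tailRatioProd (θ ∘ σ) =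
      u ^ n / n.factorial := by
  have hpos : ∀ᵐ θ : Fin n → ℝ, ∀ i, θ i ≠ 0 :=
    ae_all_iff.2 fun i => by simpa only [volume_pi] using Measure.ae_eval_ne (fun _ => volume) i 0
  rw [← integral_finsetSum _ fun σ _ => integrableOn_tailRatioProd_comp σ u]
  calc ∫ θ in solidSimplex (Fin n) u, ∑ σ : Equiv.Perm (Fin n), tailRatioProd (θ ∘ σ)
      = ∫ θ in solidSimplex (Fin n) u, (1 : ℝ) := by
        refine setIntegral_congr_ae (isClosed_solidSimplex u).measurableSet ?_
        filter_upwards [hpos] with θ hθ hθS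
        exact sum_perm_tailRatioProd_comp θ fun i => (hθS.1 i).lt_of_ne' (hθ i)
    _ = u ^ n / n.factorial := by
        rw [setIntegral_const, measureReal_def, volume_solidSimplex n hu,
          ENNReal.toReal_ofReal (by positivity), smul_eq_mul, mul_one]

theorem integral_over_solid_simplex_general (n : ℕ) (u : ℝ) (hu : 0 < u) :
    ∫ θ in {θ : Fin n → ℝ | (∀ i, 0 ≤ θ i) ∧ ∑ i, θ i ≤ u},
      ∏ i, θ i / (∑ j ∈ Finset.Ici i, θ j) =
    u ^ n / (Nat.factorial n : ℝ) ^ 2 := by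
  have hsum := sum_perm_setIntegral_tailRatioProd_comp n hu.le
  simp only [setIntegral_solidSimplex_comp_perm tailRatioProd, sum_const, card_univ,
    Fintype.card_perm, Fintype.card_fin, nsmul_eq_mul] at hsum
  change ∫ θ in solidSimplex (Fin n) u, tailRatioProd θ = _
  have hfac : (n.factorial : ℝ) ≠ 0 := by positivity
  rw [sq, ← div_div, ← hsum, mul_div_cancel_left₀ _ hfac]

/-- The integral of `∏_{i=1}^n θ_i/(Σ_{j=i}^n θ_j)` over the solid simplex
`{θ : θ_i ≥ 0, θ_1 + ⋯ + θ_n ≤ u}` equals `u^n/(n!)^2`. -/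
theorem integral_over_solid_simplex (n : ℕ) (hn : 1 ≤ n) (u : ℝ) (hu : 0 < u) :
    ∫ θ in {θ : Fin n → ℝ | (∀ i, 0 ≤ θ i) ∧ ∑ i, θ i ≤ u},
      ∏ i, θ i / (∑ j ∈ Finset.Ici i, θ j) =
    u ^ n / (Nat.factorial n : ℝ) ^ 2 :=
  integral_over_solid_simplex_general n u hu
end

section
/- Let Θ and Θ' be independent random vectors, each uniformly distributed on Δ^{n,u}. Then P(Θ ≤_lr Θ') = 1/n!. -/
/-!
Permuting coordinates is an isometry of `ℝⁿ` preserving the simplex, hence preserves the uniform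
measure, so the `n!` events `Θ ∘ σ ≤_lr Θ' ∘ σ` (`σ` a permutation) all have the same probability.
Almost surely every `Θᵢ` is positive and the ratios `Θ'ᵢ / Θᵢ` are pairwise distinct: each
exceptional set lies in an affine subspace of dimension `n - 2`, which is null for the
`(n - 1)`-dimensional Hausdorff measure. For such `(Θ, Θ')`, `Θ ∘ σ ≤_lr Θ' ∘ σ` says that `σ`
sorts the ratios, so exactly one of the events occurs, and each has probability `1 / n!`.
-/

open MeasureTheory

/-- The likelihood ratio order. -/
def lrLE {m : ℕ} (θ θ' : Fin m → ℝ) : Prop :=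
  ∀ i j : Fin m, i ≤ j → θ' i * θ j ≤ θ i * θ' j

open ProbabilityTheory Set Module

theorem LinearMap.finrank_ker_of_surjective {K V W : Type*} [DivisionRing K] [AddCommGroup V]
    [Module K V] [AddCommGroup W] [Module K W] [FiniteDimensional K V] {L : V →ₗ[K] W}
    (hL : Function.Surjective L) : finrank K (ker L) = finrank K V - finrank K W := by
  rw [← L.finrank_range_add_finrank_ker, range_eq_top.2 hL, finrank_top]
  omega

namespace LinearMap

variable {E F : Type*} [NormedAddCommGroup E] [NormedSpace ℝ E] [MeasurableSpace E]
  [BorelSpace E] [AddCommGroup F] [Module ℝ F]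

theorem hausdorffMeasure_eq_of_subset_preimage_singleton {L : E →ₗ[ℝ] F} {c : F} {A : Set E}
    (hA : A ⊆ L ⁻¹' {c}) {p : E} (hp : L p = c) {d : ℝ} (hd : 0 ≤ d) :
    μH[d] A = μH[d] {v : ker L | p + (v : E) ∈ A} := by
  have hiso : Isometry fun v : ker L => p + (v : E) :=
    (isometry_add_left p).comp isometry_subtype_coe
  rw [← hiso.hausdorffMeasure_image (Or.inl hd)]
  congr 1
  ext x
  refine ⟨fun hx => ⟨⟨x - p, ?_⟩, by simpa using hx, by simp⟩, ?_⟩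
  · simp [mem_ker, map_sub, hp, show L x = c from hA hx]
  · rintro ⟨v, hv, rfl⟩
    exact hv

variable [FiniteDimensional ℝ E]

theorem hausdorffMeasure_eq_zero_of_subset_preimage_singleton {L : E →ₗ[ℝ] F} {c : F}
    {A : Set E} (hA : A ⊆ L ⁻¹' {c}) {d : ℝ} (hd : finrank ℝ (ker L) < d) : μH[d] A = 0 := by
  obtain rfl | ⟨p, hp⟩ := A.eq_empty_or_nonempty
  · exact measure_empty
  rw [hausdorffMeasure_eq_of_subset_preimage_singleton hA (hA hp) ((Nat.cast_nonneg _).trans hd.le),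
    Real.hausdorffMeasure_of_finrank_lt hd, Measure.coe_zero, Pi.zero_apply]

theorem hausdorffMeasure_lt_top_of_subset_preimage_singleton {L : E →ₗ[ℝ] F} {c : F}
    {A : Set E} (hA : A ⊆ L ⁻¹' {c}) (hbdd : Bornology.IsBounded A) :
    μH[finrank ℝ (ker L)] A < ⊤ := by
  obtain rfl | ⟨p, hp⟩ := A.eq_empty_or_nonempty
  · simp
  rw [hausdorffMeasure_eq_of_subset_preimage_singleton hA (hA hp) (Nat.cast_nonneg _)]
  exact Bornology.IsBounded.measure_lt_top
    (((isometry_add_left p).comp isometry_subtype_coe).antilipschitz.isBounded_preimage hbdd)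

end LinearMap

theorem MeasureTheory.MeasurePreserving.cond {α β : Type*} [MeasurableSpace α]
    [MeasurableSpace β] {μa : Measure α} {μb : Measure β} {f : α → β}
    (hf : MeasurePreserving f μa μb) {s : Set β} (hs : MeasurableSet s) :
    MeasurePreserving f μa[|f ⁻¹' s] μb[|s] := by
  rw [ProbabilityTheory.cond, ProbabilityTheory.cond, hf.measure_preimage hs.nullMeasurableSet]
  exact (hf.restrict_preimage hs).smul_measure _

theorem MeasureTheory.measure_eq_inv_card_of_ae_existsUnique {α ι : Type*} [MeasurableSpace α]
    [Fintype ι] {ν : Measure α} [IsProbabilityMeasure ν] {A : ι → Set α}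
    (hA : ∀ i, NullMeasurableSet (A i) ν) (hpart : ∀ᵐ x ∂ν, ∃! i, x ∈ A i)
    (heq : ∀ i j, ν (A i) = ν (A j)) (i : ι) : ν (A i) = (Fintype.card ι : ENNReal)⁻¹ := by
  have hdisj : Pairwise (Function.onFun (AEDisjoint ν) A) := fun j k hjk =>
    measure_eq_zero_iff_ae_notMem.2 <| by
      filter_upwards [hpart] with x ⟨l, _, hl⟩ ⟨hj, hk⟩
      exact hjk ((hl j hj).trans (hl k hk).symm)
  have hcover : ν (⋃ j, A j) = 1 := by
    rw [measure_congr (ae_eq_univ.2 _), measure_univ]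
    refine measure_eq_zero_iff_ae_notMem.2 ?_
    filter_upwards [hpart] with x ⟨j, hj, _⟩ hx
    exact hx (mem_iUnion_of_mem j hj)
  rw [measure_iUnion₀ hdisj hA, tsum_fintype, Finset.sum_congr rfl fun j _ => heq j i,
    Finset.sum_const, Finset.card_univ, nsmul_eq_mul] at hcover
  exact ENNReal.eq_inv_of_mul_eq_one_left (by rwa [mul_comm])

theorem lrLE_iff_monotone_div {m : ℕ} {θ : Fin m → ℝ} (hθ : ∀ i, 0 < θ i) (θ' : Fin m → ℝ) :
    lrLE θ θ' ↔ Monotone fun i => θ' i / θ i :=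
  forall₂_congr fun i j => imp_congr_right fun _ => by
    rw [div_le_div_iff₀ (hθ i) (hθ j), mul_comm (θ' j)]

theorem existsUnique_perm_lrLE {m : ℕ} {θ θ' : Fin m → ℝ} (hθ : ∀ i, 0 < θ i)
    (hties : ∀ i j, i ≠ j → θ' i * θ j ≠ θ i * θ' j) :
    ∃! σ : Equiv.Perm (Fin m), lrLE (θ ∘ σ) (θ' ∘ σ) := by
  set r : Fin m → ℝ := fun i => θ' i / θ i
  have hσ (σ : Equiv.Perm (Fin m)) : lrLE (θ ∘ σ) (θ' ∘ σ) ↔ Monotone (r ∘ σ) :=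
    lrLE_iff_monotone_div (fun i => hθ (σ i)) _
  have hr : Function.Injective r := fun i j hij => by
    by_contra hne
    rw [div_eq_div_iff (hθ i).ne' (hθ j).ne'] at hij
    exact hties i j hne (by rw [hij, mul_comm])
  refine ⟨Tuple.sort r, (hσ _).2 (Tuple.monotone_sort r), fun τ hτ => ?_⟩
  exact Equiv.ext fun i =>
    hr (congrFun (Tuple.unique_monotone ((hσ τ).1 hτ) (Tuple.monotone_sort r)) i)

theorem isClosed_setOf_lrLE (n : ℕ) :
    IsClosed {p : EuclideanSpace ℝ (Fin n) × EuclideanSpace ℝ (Fin n) |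
      lrLE (fun j => p.1 j) (fun j => p.2 j)} := by
  simp only [lrLE, ofPred_forall]
  exact isClosed_iInter fun i => isClosed_iInter fun j => isClosed_iInter fun _ =>
    isClosed_le (by fun_prop) (by fun_prop)

noncomputable def coordSum (n : ℕ) : EuclideanSpace ℝ (Fin n) →ₗ[ℝ] ℝ :=
  ∑ i, (EuclideanSpace.proj i : EuclideanSpace ℝ (Fin n) →L[ℝ] ℝ).toLinearMap

@[simp]
theorem coordSum_apply {n : ℕ} (x : EuclideanSpace ℝ (Fin n)) : coordSum n x = ∑ i, x i := by
  simp [coordSum]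

theorem coordSum_surjective {n : ℕ} (i : Fin n) : Function.Surjective (coordSum n) := fun s =>
  ⟨EuclideanSpace.single i s, by simp⟩

noncomputable def sumAndDiff {n : ℕ} (a b : ℝ) (i j : Fin n) :
    EuclideanSpace ℝ (Fin n) →ₗ[ℝ] ℝ × ℝ :=
  (coordSum n).prod
    (a • (EuclideanSpace.proj i).toLinearMap - b • (EuclideanSpace.proj j).toLinearMap)

@[simp]
theorem sumAndDiff_apply {n : ℕ} (a b : ℝ) (i j : Fin n) (x : EuclideanSpace ℝ (Fin n)) :
    sumAndDiff a b i j x = (∑ k, x k, a * x i - b * x j) := by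
  simp [sumAndDiff]

theorem sumAndDiff_surjective {n : ℕ} {i j : Fin n} (hij : i ≠ j) {a b : ℝ} (hab : a + b ≠ 0) :
    Function.Surjective (sumAndDiff a b i j) := by
  rintro ⟨s, t⟩
  refine ⟨EuclideanSpace.single i ((t + b * s) / (a + b)) +
    EuclideanSpace.single j ((a * s - t) / (a + b)), ?_⟩
  simp only [sumAndDiff_apply, PiLp.add_apply, PiLp.single_apply, Finset.sum_add_distrib,
    Finset.sum_ite_eq', Finset.mem_univ, ↓reduceIte, hij, hij.symm, add_zero, zero_add,
    Prod.mk.injEq]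
  constructor <;> field_simp <;> ring

def simplex (n : ℕ) (u : ℝ) : Set (EuclideanSpace ℝ (Fin n)) :=
  {x | (∀ i, 0 ≤ x i) ∧ ∑ i, x i = u}

theorem isClosed_simplex (n : ℕ) (u : ℝ) : IsClosed (simplex n u) := by
  simp only [simplex, ofPred_and, ofPred_forall]
  exact (isClosed_iInter fun i => isClosed_le continuous_const (by fun_prop)).inter
    (isClosed_eq (by fun_prop) continuous_const)

theorem isBounded_simplex (n : ℕ) (u : ℝ) : Bornology.IsBounded (simplex n u) := by
  refine ((PiLp.antilipschitzWith_ofLp 2 _).isBounded_preimage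
    (Metric.isBounded_Icc (0 : Fin n → ℝ) (fun _ => u))).subset fun x hx => ⟨hx.1, fun i => ?_⟩
  rw [← hx.2]
  exact Finset.single_le_sum (fun j _ => hx.1 j) (Finset.mem_univ i)

theorem simplex_subset_preimage_coordSum (n : ℕ) (u : ℝ) :
    simplex n u ⊆ coordSum n ⁻¹' {u} := fun x hx => by simpa using hx.2

theorem pi_Ioo_subset_image_simplex {m : ℕ} {u : ℝ} (hu : 0 ≤ u) :
    univ.pi (fun _ => Ioo 0 (u / (m + 1))) ⊆
      (fun (x : EuclideanSpace ℝ (Fin (m + 1))) (i : Fin m) => x i.castSucc) ''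
        simplex (m + 1) u := by
  intro y hy
  simp only [mem_univ_pi, mem_Ioo] at hy
  have hsum : ∑ i, y i ≤ u :=
    calc ∑ i, y i ≤ ∑ _i : Fin m, u / (m + 1) := Finset.sum_le_sum fun i _ => (hy i).2.le
      _ ≤ u := by
        rw [Finset.sum_const, Finset.card_univ, Fintype.card_fin, nsmul_eq_mul,
          ← mul_div_assoc, div_le_iff₀ (by positivity)]
        nlinarith
  refine ⟨WithLp.toLp 2 (Fin.snoc y (u - ∑ i, y i)), ⟨fun k => ?_, ?_⟩, ?_⟩
  · induction k using Fin.lastCases with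
    | last => simpa using hsum
    | cast i => simpa using (hy i).1.le
  · simp [Fin.sum_univ_castSucc]
  · ext i
    simp

theorem hausdorffMeasure_simplex_pos {n : ℕ} (hn : n ≠ 0) {u : ℝ} (hu : 0 < u) :
    0 < μH[(n : ℝ) - 1] (simplex n u) := by
  obtain ⟨m, rfl⟩ := Nat.exists_eq_add_one_of_ne_zero hn
  have hπ : LipschitzWith 1 fun (x : EuclideanSpace ℝ (Fin (m + 1))) (i : Fin m) =>
      x i.castSucc := LipschitzWith.mk_one fun x y =>
    (dist_pi_le_iff dist_nonneg).2 fun i => PiLp.dist_apply_le x y i.castSucc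
  calc (0 : ENNReal) < volume (univ.pi fun _ : Fin m => Ioo 0 (u / (m + 1))) := by
        rw [volume_pi_pi]
        exact CanonicallyOrderedAdd.prod_pos.2 fun i _ => by simpa using by positivity
    _ ≤ μH[Fintype.card (Fin m)] (_ '' simplex (m + 1) u) := by
        rw [hausdorffMeasure_pi_real]
        exact measure_mono (pi_Ioo_subset_image_simplex hu.le)
    _ ≤ μH[((m + 1 : ℕ) : ℝ) - 1] (simplex (m + 1) u) := by
        simpa using hπ.hausdorffMeasure_image_le (Nat.cast_nonneg _) (simplex (m + 1) u)

theorem hausdorffMeasure_simplex_lt_top {n : ℕ} (hn : n ≠ 0) (u : ℝ) :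
    μH[(n : ℝ) - 1] (simplex n u) < ⊤ := by
  have hker : finrank ℝ (LinearMap.ker (coordSum n)) = n - 1 := by
    rw [LinearMap.finrank_ker_of_surjective (coordSum_surjective ⟨0, Nat.pos_of_ne_zero hn⟩),
      finrank_euclideanSpace_fin, finrank_self]
  have hd : (n : ℝ) - 1 = finrank ℝ (LinearMap.ker (coordSum n)) := by
    rw [hker, Nat.cast_sub (Nat.one_le_iff_ne_zero.2 hn), Nat.cast_one]
  rw [hd]
  exact LinearMap.hausdorffMeasure_lt_top_of_subset_preimage_singleton
    (simplex_subset_preimage_coordSum n u) (isBounded_simplex n u)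

theorem hausdorffMeasure_preimage_sumAndDiff_eq_zero {n : ℕ} {i j : Fin n} (hij : i ≠ j)
    {a b : ℝ} (hab : a + b ≠ 0) (c : ℝ × ℝ) :
    μH[(n : ℝ) - 1] (sumAndDiff a b i j ⁻¹' {c}) = 0 := by
  refine LinearMap.hausdorffMeasure_eq_zero_of_subset_preimage_singleton subset_rfl ?_
  rw [LinearMap.finrank_ker_of_surjective (sumAndDiff_surjective hij hab),
    finrank_euclideanSpace_fin, Module.finrank_prod, finrank_self]
  have : 2 ≤ n := Fin.nontrivial_iff_two_le.1 ⟨⟨i, j, hij⟩⟩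
  rw [Nat.cast_sub (by omega)]
  push_cast
  linarith

noncomputable def permCoords {n : ℕ} (σ : Equiv.Perm (Fin n)) :
    EuclideanSpace ℝ (Fin n) ≃ₗᵢ[ℝ] EuclideanSpace ℝ (Fin n) :=
  LinearIsometryEquiv.piLpCongrLeft 2 ℝ ℝ σ.symm

@[simp]
theorem permCoords_apply {n : ℕ} (σ : Equiv.Perm (Fin n)) (x : EuclideanSpace ℝ (Fin n))
    (i : Fin n) : permCoords σ x i = x (σ i) := by
  simp [permCoords, LinearIsometryEquiv.piLpCongrLeft_apply, Equiv.piCongrLeft'_apply]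

theorem preimage_permCoords_simplex {n : ℕ} (σ : Equiv.Perm (Fin n)) (u : ℝ) :
    permCoords σ ⁻¹' simplex n u = simplex n u := by
  ext x
  simp only [simplex, mem_preimage, mem_ofPred_eq, permCoords_apply,
    Equiv.sum_comp σ (fun i => x i)]
  exact and_congr_left' (σ.forall_congr_right (q := fun i => 0 ≤ x i))

noncomputable def uniformSimplex (n : ℕ) (u : ℝ) : Measure (EuclideanSpace ℝ (Fin n)) :=
  μH[(n : ℝ) - 1][|simplex n u]

section UniformSimplex

variable {n : ℕ} {u : ℝ}

theorem isProbabilityMeasure_uniformSimplex (hn : n ≠ 0) (hu : 0 < u) :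
    IsProbabilityMeasure (uniformSimplex n u) :=
  cond_isProbabilityMeasure_of_finite (hausdorffMeasure_simplex_pos hn hu).ne'
    (hausdorffMeasure_simplex_lt_top hn u).ne

theorem measurePreserving_permCoords_uniformSimplex (σ : Equiv.Perm (Fin n)) :
    MeasurePreserving (permCoords σ) (uniformSimplex n u) (uniformSimplex n u) := by
  have := ((permCoords σ).toIsometryEquiv.measurePreserving_hausdorffMeasure ((n : ℝ) - 1)).cond
    (isClosed_simplex n u).measurableSet
  rwa [LinearIsometryEquiv.coe_toIsometryEquiv, preimage_permCoords_simplex] at this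

theorem ae_uniformSimplex_mul_ne_mul {i j : Fin n} (hij : i ≠ j) {a b : ℝ} (hab : a + b ≠ 0) :
    ∀ᵐ x ∂uniformSimplex n u, a * x i ≠ b * x j := by
  filter_upwards [ae_cond_mem (isClosed_simplex n u).measurableSet,
    cond_absolutelyContinuous.ae_le (measure_eq_zero_iff_ae_notMem.1
      (hausdorffMeasure_preimage_sumAndDiff_eq_zero hij hab (u, 0)))] with x hx hfiber heq
  exact hfiber (by simp [hx.2, heq])

theorem ae_uniformSimplex_pos (hn : 2 ≤ n) : ∀ᵐ x ∂uniformSimplex n u, ∀ i, 0 < x i := by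
  have : Nontrivial (Fin n) := Fin.nontrivial_iff_two_le.2 hn
  refine ae_all_iff.2 fun i => ?_
  obtain ⟨j, hji⟩ := exists_ne i
  filter_upwards [ae_cond_mem (isClosed_simplex n u).measurableSet,
    ae_uniformSimplex_mul_ne_mul hji.symm (a := 1) (b := 0) (by norm_num)] with x hx hxi
  exact (hx.1 i).lt_of_ne (by simpa [eq_comm] using hxi)

theorem ae_uniformSimplex_prod_mul_ne_mul (hn : 2 ≤ n) (hu : 0 < u) :
    ∀ᵐ p ∂(uniformSimplex n u).prod (uniformSimplex n u),
      ∀ i j, i ≠ j → p.2 i * p.1 j ≠ p.1 i * p.2 j := by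
  have := isProbabilityMeasure_uniformSimplex (by omega : n ≠ 0) hu
  refine ae_all_iff.2 fun i => ae_all_iff.2 fun j =>
    Filter.eventually_imp_distrib_left.2 fun hij => ?_
  refine (Measure.ae_prod_iff_ae_ae
    (measurableSet_eq_fun (by fun_prop) (by fun_prop)).compl).2 ?_
  filter_upwards [ae_uniformSimplex_pos hn] with θ hθ
  filter_upwards [ae_uniformSimplex_mul_ne_mul hij (by linarith [hθ i, hθ j] : θ j + θ i ≠ 0)]
    with x hx
  simpa [mul_comm] using hx

end UniformSimplex

/-- For `Θ, Θ'` independent and uniform on the simplex `Δ^{n,u}` (normalized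
`(n-1)`-dimensional Hausdorff measure), `P(Θ ≤_lr Θ') = 1/n!`. -/
theorem prob_lr (n : ℕ) (hn : 2 ≤ n) (u : ℝ) (hu : 0 < u)
    (S : Set (EuclideanSpace ℝ (Fin n)))
    (hS : S = {x | (∀ i, 0 ≤ x i) ∧ ∑ i, x i = u})
    (μ : Measure (EuclideanSpace ℝ (Fin n)))
    (hμ : μ = (μH[(n : ℝ) - 1] S)⁻¹ • (μH[(n : ℝ) - 1]).restrict S) :
    (μ.prod μ) {p | lrLE (fun j => p.1 j) (fun j => p.2 j)} =
      ((Nat.factorial n : ENNReal))⁻¹ := by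
  obtain rfl : μ = uniformSimplex n u := by rw [hμ, hS]; rfl
  have := isProbabilityMeasure_uniformSimplex (by omega : n ≠ 0) hu
  set ν := (uniformSimplex n u).prod (uniformSimplex n u)
  set T := {p : EuclideanSpace ℝ (Fin n) × EuclideanSpace ℝ (Fin n) |
    lrLE (fun j => p.1 j) (fun j => p.2 j)}
  have hT : MeasurableSet T := (isClosed_setOf_lrLE n).measurableSet
  let A (σ : Equiv.Perm (Fin n)) := Prod.map (permCoords σ) (permCoords σ) ⁻¹' T
  have hA (σ : Equiv.Perm (Fin n)) : ν (A σ) = ν T :=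
    ((measurePreserving_permCoords_uniformSimplex σ).prod
      (measurePreserving_permCoords_uniformSimplex σ)).measure_preimage hT.nullMeasurableSet
  have hpart : ∀ᵐ p ∂ν, ∃! σ, p ∈ A σ := by
    filter_upwards [Measure.quasiMeasurePreserving_fst.ae (ae_uniformSimplex_pos hn),
      ae_uniformSimplex_prod_mul_ne_mul hn hu] with p hpos hties
    exact existsUnique_perm_lrLE hpos hties
  rw [← hA 1, measure_eq_inv_card_of_ae_existsUnique
    (fun σ => (hT.preimage (by fun_prop)).nullMeasurableSet) hpart
    (fun σ τ => (hA σ).trans (hA τ).symm), Fintype.card_perm, Fintype.card_fin]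
end
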